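/- Every magma G satisfying x*((y*z)*u) = u*((x*y)*z) for all x, y, z, u also satisfies x*((y*z)*u) = z*((u*x)*y) for all x, y, z, u. The converse implication fails: the magma on ZMod 3 with operation a*b := b − a satisfies x*((y*z)*u) = z*((u*x)*y) for all x, y, z, u but does not satisfy x*((y*z)*u) = u*((x*y)*z) for all x, y, z, u. -/
import Mathlib

/-- The magma on `ZMod 3` with operation `a * b := b − a`. -/
def op (a b : ZMod 3) : ZMod 3 := b - a

/-- Every magma satisfying `x((yz)u) = u((xy)z)` also satisfies `x((yz)u) = z((ux)y)`,
but not conversely: the magma `(ZMod 3, op)` with `op a b = b − a` satisfies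
`x((yz)u) = z((ux)y)` but not `x((yz)u) = u((xy)z)`. -/
theorem stmt17.{w} :
    (∀ (G : Type w) [Mul G],
      (∀ x y z u : G, x * ((y * z) * u) = u * ((x * y) * z)) →
      ∀ x y z u : G, x * ((y * z) * u) = z * ((u * x) * y)) ∧
    (∀ x y z u : ZMod 3, op x (op (op y z) u) = op z (op (op u x) y)) ∧
    ¬(∀ x y z u : ZMod 3, op x (op (op y z) u) = op u (op (op x y) z)) := by
  refine ⟨fun G _ h x y z u => (h x y z u).trans (h u x y z), fun x y z u => ?_, fun h => ?_⟩
  · simp only [op]; ring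
  · have := h 1 0 0 0
    simp [op] at this
    exact absurd this (by decide)
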